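/- Let N(v) = Σ_{j∈J} m_j·|D(v,w_j)| be a norm of Culler–Shalen type on ℝ², assume there exist j, k ∈ J with D(w_j,w_k) ≠ 0, and let α, β ∈ ℤ² be linearly independent. If N(β) ≤ N(γ) for every nonzero γ ∈ ℤ² (β has minimal norm among nonzero lattice classes), then there exists j ∈ J with |D(β,w_j)| ≤ |D(α,w_j)|. -/

import Mathlib

/-- `D(v,w) = v₁w₂ − v₂w₁` for `v, w ∈ ℝ²`. -/
noncomputable def Dd (v w : ℝ × ℝ) : ℝ := v.1 * w.2 - v.2 * w.1

/-- Inclusion of the lattice `ℤ²` into `ℝ²`. -/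
def toR (w : ℤ × ℤ) : ℝ × ℝ := ((w.1 : ℝ), (w.2 : ℝ))

theorem exists_le_of_weighted_sum_le {ι R : Type*} [Fintype ι] [Nonempty ι]
    [Semiring R] [LinearOrder R] [IsStrictOrderedRing R] {m f g : ι → R}
    (hm : ∀ i, 0 < m i) (h : ∑ i, m i * f i ≤ ∑ i, m i * g i) : ∃ i, f i ≤ g i := by
  by_contra! hlt
  exact h.not_gt <| Finset.sum_lt_sum_of_nonempty Finset.univ_nonempty
    fun i _ ↦ mul_lt_mul_of_pos_left (hlt i) (hm i)

theorem ne_zero_of_Dd_toR_ne_zero {α β : ℤ × ℤ} (h : Dd (toR α) (toR β) ≠ 0) : α ≠ 0 := by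
  rintro rfl
  simp [Dd, toR] at h

theorem boundary_class_of_minimal_norm_general
    {J : Type*} [Fintype J] [Nonempty J]
    (m : J → ℝ) (hm : ∀ j, 0 < m j)
    (w : J → ℤ × ℤ)
    (α β : ℤ × ℤ) (hind : Dd (toR α) (toR β) ≠ 0)
    (N : (ℝ × ℝ) → ℝ) (hN : ∀ v, N v = ∑ j, m j * |Dd v (toR (w j))|)
    (hmin : ∀ γ : ℤ × ℤ, γ ≠ 0 → N (toR β) ≤ N (toR γ)) :
    ∃ j, |Dd (toR β) (toR (w j))| ≤ |Dd (toR α) (toR (w j))| := by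
  have hβα : N (toR β) ≤ N (toR α) := hmin α (ne_zero_of_Dd_toR_ne_zero hind)
  rw [hN, hN] at hβα
  exact exists_le_of_weighted_sum_le hm hβα

/-- For a norm of Culler–Shalen type `N(v) = Σ_j m_j·|D(v,w_j)|`
(with some `D(w_j,w_k) ≠ 0`) and linearly independent `α, β ∈ ℤ²`, if `β` has
minimal norm among nonzero lattice classes, then there is `j ∈ J` with
`|D(β,w_j)| ≤ |D(α,w_j)|`. -/
theorem boundary_class_of_minimal_norm
    {J : Type*} [Fintype J] [Nonempty J]
    (m : J → ℝ) (hm : ∀ j, 0 < m j)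
    (w : J → ℤ × ℤ) (hw : ∀ j, Int.gcd (w j).1 (w j).2 = 1)
    (hnorm : ∃ j k, Dd (toR (w j)) (toR (w k)) ≠ 0)
    (α β : ℤ × ℤ) (hind : Dd (toR α) (toR β) ≠ 0)
    (N : (ℝ × ℝ) → ℝ) (hN : ∀ v, N v = ∑ j, m j * |Dd v (toR (w j))|)
    (hmin : ∀ γ : ℤ × ℤ, γ ≠ 0 → N (toR β) ≤ N (toR γ)) :
    ∃ j, |Dd (toR β) (toR (w j))| ≤ |Dd (toR α) (toR (w j))| :=
  boundary_class_of_minimal_norm_general m hm w α β hind N hN hmin
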